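/- (Justin's formula, binary case) For all words v, u over {a,b}, ψ(vu) = μ_v(ψ(u)) ψ(v), where μ_v is the composition μ_{x_1}∘⋯∘μ_{x_n} for v = x_1⋯x_n. -/

import Mathlib

/-- Stern's diatomic sequence. -/
def stern : ℕ → ℕ
  | 0 => 0
  | 1 => 1
  | n + 2 =>
      if (n + 2) % 2 = 0 then stern ((n + 2) / 2)
      else stern ((n + 2) / 2) + stern ((n + 2) / 2 + 1)
decreasing_by all_goals omega

/-- Shortest palindrome having `w` as a prefix (right palindromic closure). -/
def palClosure (w : List Bool) : List Bool :=
  let d := Nat.find (p := fun d => (w.drop d).reverse = w.drop d)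
    ⟨w.length, by simp⟩
  w ++ (w.take d).reverse

/-- Iterated palindromic closure (palindromization map ψ). -/
def psi (v : List Bool) : List Bool :=
  v.foldl (fun w x => palClosure (w ++ [x])) []

/-- Minimal period of a word (`1` for the empty word). -/
def minPeriod (w : List Bool) : ℕ :=
  Nat.find (p := fun p => 1 ≤ p ∧ ∀ i < w.length, i + p < w.length → w[i]? = w[i + p]?)
    ⟨w.length + 1, by omega, fun i _ h => absurd h (by omega)⟩

/-- The morphism μ_x on a single letter. -/
def muLetter (x y : Bool) : List Bool := if y = x then [x] else [x, y]

/-- Action of μ_x on a word. -/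
def muL (x : Bool) (w : List Bool) : List Bool := w.flatMap (muLetter x)

/-- μ_v = μ_{x₁} ∘ ⋯ ∘ μ_{xₙ} for v = x₁⋯xₙ. -/
def muWord (v : List Bool) (w : List Bool) : List Bool := v.foldr muL w

/-- Fibonacci numbers shifted: `fibD k = F_{k-1}` where F_{-1}=F_0=1. -/
def fibD : ℕ → ℕ
  | 0 => 1
  | 1 => 1
  | n + 2 => fibD (n + 1) + fibD n

/-- Head-recursion helper for continuants. -/
def khead : List ℤ → ℤ
  | [] => 1
  | [a] => a
  | a :: b :: t => a * khead (b :: t) + khead t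

/-- Continuant K[a₀,…,aₙ]: K[]=1, K[a₀]=a₀, K[a₀,…,aₙ]=aₙK[a₀,…,a_{n-1}]+K[a₀,…,a_{n-2}]. -/
def contK (l : List ℤ) : ℤ := khead l.reverse

/-- Value of a little-endian list of binary digits. -/
def ofBits (l : List Bool) : ℕ := l.foldr (fun b n => 2 * n + (if b then 1 else 0)) 0

/-- The integer obtained by reversing the binary expansion of `n`. -/
def binRev (n : ℕ) : ℕ := ofBits n.bits.reverse

/-- The word b(ab)^m over {a,b} ≃ {false,true}. -/
def altPat : ℕ → List Bool
  | 0 => [true]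
  | m + 1 => altPat m ++ [false, true]


namespace J

def D (w : List Bool) : ℕ :=
  Nat.find (p := fun d => (w.drop d).reverse = w.drop d) ⟨w.length, by simp⟩

lemma palClosure_eq (w : List Bool) :
    palClosure w = w ++ (w.take (D w)).reverse := rfl

lemma D_spec (w : List Bool) : (w.drop (D w)).reverse = w.drop (D w) := by
  exact Nat.find_spec (⟨w.length, by simp⟩ : ∃ d, (List.drop d w).reverse = List.drop d w)

lemma D_min {w : List Bool} {k : ℕ} (h : (w.drop k).reverse = w.drop k) : D w ≤ k := by
  exact Nat.find_min' (⟨w.length, by simp⟩ : ∃ d, (List.drop d w).reverse = List.drop d w) h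

lemma D_le (w : List Bool) : D w ≤ w.length := D_min (by simp)

lemma pc_length (w : List Bool) : (palClosure w).length = w.length + D w := by
  rw [palClosure_eq]
  simp [List.length_take, Nat.min_eq_left (D_le w)]

lemma pc_prefix (w : List Bool) : w <+: palClosure w :=
  ⟨(w.take (D w)).reverse, rfl⟩

lemma pc_pal (w : List Bool) : (palClosure w).reverse = palClosure w := by
  rw [palClosure_eq]
  have h : w.reverse = w.drop (D w) ++ (w.take (D w)).reverse := by
    conv_lhs => rw [← List.take_append_drop (D w) w]
    rw [List.reverse_append, D_spec w]
  rw [List.reverse_append, List.reverse_reverse, h, ← List.append_assoc,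
    List.take_append_drop]

lemma pal_prefix_char {p w : List Bool} (hpal : p.reverse = p) (hpre : w <+: p)
    (hlen : p.length ≤ w.length + w.length) :
    p = w ++ (w.take (p.length - w.length)).reverse := by
  obtain ⟨t, rfl⟩ := hpre
  have hk : t.length ≤ w.length := by
    have := (List.length_append : (w ++ t).length = _) ▸ hlen; omega
  have h1 : (w ++ t).length - w.length = t.length := by simp
  rw [h1]
  congr 1
  have h2 : List.take t.length ((w ++ t).reverse) = t.reverse := by
    rw [List.reverse_append, List.take_append_of_le_length (by simp)]
    simp
  rw [hpal] at h2
  have h3 : List.take t.length (w ++ t) = List.take t.length w :=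
    List.take_append_of_le_length hk
  rw [h2] at h3
  rw [← h3, List.reverse_reverse]

lemma pc_min {p w : List Bool} (hpal : p.reverse = p) (hpre : w <+: p) :
    (palClosure w).length ≤ p.length := by
  have hwp : w.length ≤ p.length := hpre.length_le
  rcases le_or_gt p.length (w.length + w.length) with hle | hlt
  · set k := p.length - w.length with hk
    have hchar := pal_prefix_char hpal hpre hle
    have hkw : k ≤ w.length := by omega
    -- drop k w is a palindrome
    have hdk : (w.drop k).reverse = w.drop k := by
      have h1 : p = w.take k ++ w.drop k ++ (w.take k).reverse := by
        rw [List.take_append_drop]; exact hchar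
      have h2 : p.reverse = w.take k ++ (w.drop k).reverse ++ (w.take k).reverse := by
        rw [h1]; simp [List.reverse_append, List.append_assoc]
      rw [hpal, h1] at h2
      have h3 : (List.take k w ++ List.drop k w) ++ (List.take k w).reverse
          = (List.take k w ++ (List.drop k w).reverse) ++ (List.take k w).reverse := by
        simpa [List.append_assoc] using h2
      have h4 := List.append_cancel_right h3
      have h5 := List.append_cancel_left h4
      exact h5.symm
    have := D_min hdk
    rw [pc_length]; omega
  · rw [pc_length]
    have := D_le w; omega

lemma pc_of_pal_prefix_len {p w : List Bool} (hpal : p.reverse = p) (hpre : w <+: p)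
    (hlen : p.length = (palClosure w).length) : p = palClosure w := by
  have h2w : (palClosure w).length ≤ w.length + w.length := by
    rw [pc_length]; have := D_le w; omega
  have c1 := pal_prefix_char hpal hpre (by omega)
  have c2 := pal_prefix_char (pc_pal w) (pc_prefix w) h2w
  rw [c1, c2, hlen]

lemma pc_extend {w : List Bool} {c : Bool} (h : w ++ [c] <+: palClosure w) :
    palClosure (w ++ [c]) = palClosure w := by
  have h1 : (palClosure (w ++ [c])).length ≤ (palClosure w).length :=
    pc_min (pc_pal w) h
  have h2 : (palClosure w).length ≤ (palClosure (w ++ [c])).length :=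
    pc_min (pc_pal _) (List.IsPrefix.trans ⟨[c], rfl⟩ (pc_prefix _))
  exact (pc_of_pal_prefix_len (pc_pal _) h (by omega)).symm

end J

namespace J2
open J

lemma muL_nil (x : Bool) : muL x [] = [] := rfl

lemma muL_cons (x c : Bool) (w : List Bool) :
    muL x (c :: w) = muLetter x c ++ muL x w := rfl

lemma muL_append (x : Bool) (a b : List Bool) :
    muL x (a ++ b) = muL x a ++ muL x b := List.flatMap_append ..

lemma muL_rev (x : Bool) (w : List Bool) :
    x :: (muL x w).reverse = muL x w.reverse ++ [x] := by
  induction w with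
  | nil => rfl
  | cons c t ih =>
      have base : ∀ l : List Bool,
          x :: ((muL x t).reverse ++ l) = muL x t.reverse ++ ([x] ++ l) := by
        intro l
        rw [← List.cons_append, ih, List.append_assoc]
      rw [muL_cons, List.reverse_cons, muL_append, List.reverse_append]
      by_cases hc : c = x
      · subst hc
        simp only [muLetter, if_pos rfl, List.reverse_cons, List.reverse_nil,
          List.nil_append]
        rw [base]
        simp [muL_cons, muL_nil, muLetter]
      · simp only [muLetter, if_neg hc]
        rw [show ([x, c] : List Bool).reverse = [c, x] from rfl, base]
        have : muL x [c] = [x, c] := by simp [muL_cons, muL_nil, muLetter, hc]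
        rw [this]
        simp

lemma muL_length_rev (x : Bool) (w : List Bool) :
    (muL x w.reverse).length = (muL x w).length := by
  have := congrArg List.length (muL_rev x w)
  simp at this; omega

lemma muL_head (x : Bool) {w : List Bool} (h : w ≠ []) :
    ∃ r, muL x w = x :: r := by
  cases w with
  | nil => exact absurd rfl h
  | cons c t =>
      rw [muL_cons]
      by_cases hc : c = x <;> simp [muLetter, hc]

lemma muL_eq_nil (x : Bool) {w : List Bool} (h : muL x w = []) : w = [] := by
  cases w with
  | nil => rfl
  | cons c t =>
      obtain ⟨r, hr⟩ := muL_head x (w := c :: t) (by simp)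
      rw [hr] at h; simp at h

lemma muL_inj (x : Bool) : ∀ {w₁ w₂ : List Bool}, muL x w₁ = muL x w₂ → w₁ = w₂ := by
  intro w₁
  induction w₁ with
  | nil =>
      intro w₂ h
      exact (muL_eq_nil x h.symm).symm
  | cons c t ih =>
      intro w₂ h
      cases w₂ with
      | nil => exact absurd (muL_eq_nil x h) (by simp)
      | cons c' t' =>
          rw [muL_cons, muL_cons] at h
          by_cases hc : c = x <;> by_cases hc' : c' = x
          · subst hc; subst hc'
            simp only [muLetter, if_pos] at h
            have h2 := List.append_cancel_left h
            rw [ih h2]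
          · exfalso
            simp only [muLetter, if_pos hc, if_neg hc', List.cons_append,
              List.nil_append, List.cons.injEq] at h
            obtain ⟨-, h2⟩ := h
            have ht : t ≠ [] := by
              rintro rfl; rw [muL_nil] at h2; exact (List.cons_ne_nil _ _) h2.symm
            obtain ⟨r, hr⟩ := muL_head x (w := t) ht
            rw [hr] at h2
            exact hc' ((List.cons.injEq _ _ _ _).mp h2).1.symm
          · exfalso
            simp only [muLetter, if_neg hc, if_pos hc', List.cons_append,
              List.nil_append, List.cons.injEq] at h
            obtain ⟨-, h2⟩ := h
            have ht : t' ≠ [] := by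
              rintro rfl; rw [muL_nil] at h2; exact (List.cons_ne_nil _ _) h2
            obtain ⟨r, hr⟩ := muL_head x (w := t') ht
            rw [hr] at h2
            exact hc ((List.cons.injEq _ _ _ _).mp h2).1
          · simp only [muLetter, if_neg hc, if_neg hc', List.cons_append,
              List.nil_append, List.cons.injEq] at h
            obtain ⟨-, rfl, h2⟩ := h
            rw [ih h2]

lemma suffix_decomp {s A B : List Bool} (h : s <:+ A ++ B) :
    s <:+ B ∨ ∃ s₁, s₁ <:+ A ∧ s₁ ≠ [] ∧ s = s₁ ++ B := by
  obtain ⟨r, hr⟩ := h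
  have hlen : r.length + s.length = A.length + B.length := by
    have := congrArg List.length hr; simpa using this
  rcases le_or_gt s.length B.length with hle | hlt
  · left
    have hB : B <:+ A ++ B := ⟨A, rfl⟩
    rcases List.suffix_or_suffix_of_suffix ⟨r, hr⟩ hB with h1 | h1
    · exact h1
    · exact (List.IsSuffix.eq_of_length_le h1 hle).symm ▸ List.suffix_refl _
  · right
    have hrA : r.length ≤ A.length := by omega
    have hs : s = A.drop r.length ++ B := by
      have h1 : s = (r ++ s).drop r.length := by simp
      rw [hr, List.drop_append_of_le_length hrA] at h1
      exact h1
    refine ⟨A.drop r.length, List.drop_suffix _ _, ?_, hs⟩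
    intro h0
    have := congrArg List.length h0
    simp at this; omega

lemma suffix_of_pair {s₁ x c : _} (hne : s₁ ≠ ([] : List Bool))
    (hsuf : s₁ <:+ [x, c]) : s₁ = [c] ∨ s₁ = [x, c] := by
  rcases List.suffix_cons_iff.mp hsuf with h | h
  · right; exact h
  · rcases List.suffix_cons_iff.mp h with h2 | h2
    · left; exact h2
    · exact absurd (List.suffix_nil.mp h2) hne

lemma suffix_of_single {s₁ x : _} (hne : s₁ ≠ ([] : List Bool))
    (hsuf : s₁ <:+ [x]) : s₁ = [x] := by
  rcases List.suffix_cons_iff.mp hsuf with h | h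
  · exact h
  · exact absurd (List.suffix_nil.mp h) hne

lemma desubst (x : Bool) : ∀ {w s : List Bool}, s <:+ muL x w ++ [x] → s ≠ [] →
    s.head? = some x → ∃ t, t <:+ w ∧ s = muL x t ++ [x] := by
  intro w
  induction w with
  | nil =>
      intro s hsuf hne _
      rw [muL_nil, List.nil_append] at hsuf
      exact ⟨[], List.suffix_refl _, by rw [suffix_of_single hne hsuf]; rfl⟩
  | cons c w' ih =>
      intro s hsuf hne hhead
      rw [muL_cons, List.append_assoc] at hsuf
      rcases suffix_decomp hsuf with h | ⟨s₁, hs₁, hs₁ne, rfl⟩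
      · obtain ⟨t, ht, hts⟩ := ih h hne hhead
        exact ⟨t, ht.trans ⟨[c], rfl⟩, hts⟩
      · by_cases hc : c = x
        · subst hc
          rw [show muLetter c c = [c] from if_pos rfl] at hs₁
          rw [suffix_of_single hs₁ne hs₁]
          exact ⟨c :: w', List.suffix_refl _, by rw [muL_cons]; simp [muLetter]⟩
        · rw [show muLetter x c = [x, c] from if_neg hc] at hs₁
          rcases suffix_of_pair hs₁ne hs₁ with rfl | rfl
          · exfalso
            simp at hhead
            exact hc hhead
          · exact ⟨c :: w', List.suffix_refl _, by rw [muL_cons]; simp [muLetter, hc]⟩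

lemma prev_letter (x : Bool) : ∀ {z s : List Bool} {y : Bool}, s <:+ muL x z →
    s.head? = some y → y ≠ x → x :: s <:+ muL x z := by
  intro z
  induction z with
  | nil =>
      intro s y hsuf hhead _
      rw [muL_nil, List.suffix_nil] at hsuf
      subst hsuf; simp at hhead
  | cons c z' ih =>
      intro s y hsuf hhead hyx
      rw [muL_cons] at hsuf
      rcases suffix_decomp hsuf with h | ⟨s₁, hs₁, hs₁ne, rfl⟩
      · exact (ih h hhead hyx).trans ⟨muLetter x c, by rw [muL_cons]⟩
      · by_cases hc : c = x
        · subst hc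
          rw [show muLetter c c = [c] from if_pos rfl] at hs₁
          rw [suffix_of_single hs₁ne hs₁] at hhead
          simp at hhead
          exact absurd hhead.symm hyx
        · rw [show muLetter x c = [x, c] from if_neg hc] at hs₁
          rcases suffix_of_pair hs₁ne hs₁ with rfl | rfl
          · have : x :: ([c] ++ muL x z') = muL x (c :: z') := by
              rw [muL_cons]; simp [muLetter, hc]
            rw [muL_cons]
            exact this ▸ List.suffix_refl _
          · simp at hhead
            exact absurd hhead.symm hyx

lemma key (x : Bool) (w : List Bool) :
    palClosure (muL x w ++ [x]) = muL x (palClosure w) ++ [x] := by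
  set W := muL x w ++ [x] with hW
  set P := muL x (palClosure w) ++ [x] with hP
  -- P is a palindrome
  have hPpal : P.reverse = P := by
    rw [hP, List.reverse_append, List.reverse_singleton, List.singleton_append,
      muL_rev, pc_pal]
  -- W is a prefix of P
  have hWP : W <+: P := by
    obtain ⟨t, ht⟩ := pc_prefix w
    have hx : ∃ r, [x] ++ r = muL x t ++ [x] := by
      rcases t.eq_nil_or_concat with rfl | ⟨l, b, rfl⟩
      · exact ⟨[], by simp [muL_nil]⟩
      · obtain ⟨r, hr⟩ := muL_head x (w := l ++ [b]) (by simp)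
        exact ⟨r ++ [x], by rw [List.concat_eq_append, hr]; rfl⟩
    obtain ⟨r, hr⟩ := hx
    refine ⟨r, ?_⟩
    rw [hW, hP, ← ht, muL_append, List.append_assoc, List.append_assoc, hr]
  -- length bound
  have hdWle : D W ≤ (muL x w).length := by
    apply D_min
    rw [hW, List.drop_left]
    rfl
  have hlenW : W.length = (muL x w).length + 1 := by rw [hW]; simp
  set s := W.drop (D W) with hs
  have hslen : s.length = W.length - D W := by rw [hs]; simp
  have hsne : s ≠ [] := by
    intro h0
    have := congrArg List.length h0
    rw [hslen] at this
    simp at this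
    omega
  have hspal : s.reverse = s := D_spec W
  have hssuf : s <:+ W := List.drop_suffix _ _
  have hslast : s.getLast? = some x := by
    obtain ⟨q, hq⟩ := hssuf
    have h1 : W.getLast? = some x := by rw [hW]; simp
    rw [← hq, List.getLast?_append_of_ne_nil q hsne] at h1
    exact h1
  have hshead : s.head? = some x := by
    rw [← hspal, List.head?_reverse]
    exact hslast
  obtain ⟨t, htw, hts⟩ := desubst x (hW ▸ hssuf) hsne hshead
  have htpal : t.reverse = t := by
    apply muL_inj x
    apply List.append_cancel_right (bs := [x])
    rw [← muL_rev]
    have h2 : x :: (muL x t).reverse = (muL x t ++ [x]).reverse := by simp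
    rw [h2, ← hts, hspal, hts]
  obtain ⟨r, hrw⟩ := htw
  have hrlen : r.length + t.length = w.length := by
    have := congrArg List.length hrw; simpa using this
  have hwt : w.drop r.length = t := by
    conv_lhs => rw [← hrw]
    exact (List.drop_left : List.drop r.length (r ++ t) = t)
  have hDw : D w ≤ r.length := D_min (by rw [hwt]; exact htpal)
  have hdropw' : ∀ k, k ≤ r.length → w.drop k = r.drop k ++ t := by
    intro k hkr
    rw [← hrw, List.drop_append_of_le_length hkr]
  have hdropw : w.drop (D w) = r.drop (D w) ++ t := hdropw' (D w) hDw
  have l1 : (muL x w).length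
      = (muL x (w.take (D w))).length + (muL x (w.drop (D w))).length := by
    conv_lhs => rw [← List.take_append_drop (D w) w]
    rw [muL_append]; simp
  have l2 : (muL x (w.drop (D w))).length
      = (muL x (r.drop (D w))).length + (muL x t).length := by
    rw [hdropw, muL_append]; simp
  have l3 : (muL x (palClosure w)).length
      = (muL x w).length + (muL x (w.take (D w))).length := by
    rw [palClosure_eq, muL_append]
    simp [muL_length_rev]
  have l4 : P.length = (muL x (palClosure w)).length + 1 := by rw [hP]; simp
  have l5 : s.length = (muL x t).length + 1 := by rw [hts]; simp
  have l6 : D W + s.length = W.length := by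
    rw [hslen]
    have := D_le W; omega
  have l7 : (palClosure W).length = W.length + D W := pc_length W
  have hge : (palClosure W).length ≤ P.length := pc_min hPpal hWP
  exact (pc_of_pal_prefix_len hPpal hWP (by omega)).symm

lemma pc_mu_extend (x y : Bool) (z' : List Bool) (hyx : y ≠ x) :
    palClosure (muL x (z' ++ [y]) ++ [x]) = palClosure (muL x (z' ++ [y])) := by
  set B := muL x (z' ++ [y]) with hB
  have hBsplit : B = (muL x z' ++ [x]) ++ [y] := by
    rw [hB, muL_append, muL_cons, muL_nil]
    simp [muLetter, hyx]
  have hBne : B ≠ [] := by rw [hBsplit]; simp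
  have hBlen : 1 ≤ B.length := by
    rcases B with _ | ⟨a, l⟩
    · exact absurd rfl hBne
    · simp
  -- D B ≤ B.length - 1
  have hsingle : (B.drop (B.length - 1)).length = 1 := by
    rw [List.length_drop]; omega
  obtain ⟨a, ha⟩ := List.length_eq_one_iff.mp hsingle
  have hd1 : D B ≤ B.length - 1 := D_min (by rw [ha]; rfl)
  set s := B.drop (D B) with hs
  have hslen : s.length = B.length - D B := by rw [hs]; simp
  have hsne : s ≠ [] := by
    intro h0
    have := congrArg List.length h0
    rw [hslen] at this; simp at this; omega
  have hspal : s.reverse = s := D_spec B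
  have hssuf : s <:+ B := List.drop_suffix _ _
  have hslast : s.getLast? = some y := by
    obtain ⟨q, hq⟩ := hssuf
    have h1 : B.getLast? = some y := by rw [hBsplit]; simp
    rw [← hq, List.getLast?_append_of_ne_nil q hsne] at h1
    exact h1
  have hshead : s.head? = some y := by
    rw [← hspal, List.head?_reverse]; exact hslast
  have hxs : x :: s <:+ B := prev_letter x hssuf hshead hyx
  obtain ⟨q, hq⟩ := hxs
  have hqlen : q.length + 1 + s.length = B.length := by
    have h := congrArg List.length hq; simp at h; omega
  have hdq : D B = q.length + 1 := by omega
  have htake : B.take (D B) = q ++ [x] := by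
    rw [hdq, ← hq]
    rw [show q ++ x :: s = q ++ ([x] ++ s) by simp]
    rw [show q.length + 1 = q.length + [x].length by simp]
    rw [List.take_append]
    simp
  have hpre : B ++ [x] <+: palClosure B := by
    rw [palClosure_eq, htake]
    exact ⟨q.reverse, by simp⟩
  exact pc_extend hpre

lemma psi_nil : psi [] = [] := rfl

lemma psi_snoc (v : List Bool) (y : Bool) :
    psi (v ++ [y]) = palClosure (psi v ++ [y]) := by
  simp [psi, List.foldl_append]

lemma pc_singleton (x : Bool) : palClosure [x] = [x] := by
  have h0 : D [x] = 0 := Nat.le_zero.mp (D_min (by simp))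
  rw [palClosure_eq, h0]
  simp

lemma psi_cons (x : Bool) (u : List Bool) :
    psi (x :: u) = muL x (psi u) ++ [x] := by
  induction u using List.reverseRecOn with
  | nil =>
      show psi [x] = muL x (psi []) ++ [x]
      rw [psi_nil, muL_nil, List.nil_append]
      rw [show ([x] : List Bool) = [] ++ [x] from rfl, psi_snoc, psi_nil,
        List.nil_append, pc_singleton]
  | append_singleton u y ih =>
      have lhs : psi (x :: (u ++ [y])) = palClosure ((muL x (psi u) ++ [x]) ++ [y]) := by
        rw [show x :: (u ++ [y]) = (x :: u) ++ [y] from rfl, psi_snoc, ih]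
      have rhs : muL x (psi (u ++ [y])) ++ [x]
          = palClosure ((muL x (psi u) ++ muLetter x y) ++ [x]) := by
        rw [psi_snoc, ← key, muL_append, muL_cons, muL_nil, List.append_nil]
      rw [lhs, rhs]
      by_cases hy : y = x
      · rw [hy, show muLetter x x = [x] from if_pos rfl, List.append_assoc]
      · rw [show muLetter x y = [x, y] from if_neg hy]
        have h1 : muL x (psi u) ++ [x, y] = muL x (psi u ++ [y]) := by
          rw [muL_append, muL_cons, muL_nil]
          simp [muLetter, hy]
        rw [h1, pc_mu_extend x y (psi u) hy, ← h1]
        congr 1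
        simp

lemma muWord_nil (w : List Bool) : muWord [] w = w := rfl

lemma muWord_cons (x : Bool) (v w : List Bool) :
    muWord (x :: v) w = muL x (muWord v w) := rfl

end J2

theorem justin_formula (v u : List Bool) :
    psi (v ++ u) = muWord v (psi u) ++ psi v := by
  induction v with
  | nil => simp [J2.muWord_nil, J2.psi_nil]
  | cons x v ih =>
      rw [List.cons_append, J2.psi_cons, ih, J2.muL_append, J2.muWord_cons,
        J2.psi_cons, List.append_assoc]
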